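/- Let C be a finite collection of propositional clauses over a nonempty finite set of atoms and let k be a positive integer. Then C has a nonempty model with at most k elements if and only if the logic program P^C has a stable model with at most 2k elements. -/

import Mathlib

open scoped Classical

noncomputable section

/-- A propositional logic program rule: a head atom, a finite positive body and a
finite negative body. -/
structure LPRule (α : Type) where
  head : α
  pos : Finset α
  neg : Finset α
deriving DecidableEq

/-- A logic program is a finite set of rules. -/
abbrev LProgram (α : Type) := Finset (LPRule α)

variable {α : Type} [DecidableEq α]

/-- `horn r`: the Horn rule with the same head and positive body as `r`
and empty negative body. -/
def LPRule.horn (r : LPRule α) : LPRule α := ⟨r.head, r.pos, ∅⟩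

/-- A rule `r` is proper if `h(r) ∉ b⁺(r)` and `b⁺(r) ∩ b⁻(r) = ∅`. -/
def LPRule.proper (r : LPRule α) : Prop := r.head ∉ r.pos ∧ r.pos ∩ r.neg = ∅

/-- `At(P)`: the set of atoms occurring in `P`. -/
def atomsP (P : LProgram α) : Finset α := P.sup (fun r => insert r.head (r.pos ∪ r.neg))

/-- `h(P)`: the set of heads of rules of `P`. -/
def headsP (P : LProgram α) : Finset α := P.image LPRule.head

/-- `Neg(P)`: the set of atoms occurring negated in `P`. -/
def negP (P : LProgram α) : Finset α := P.sup LPRule.neg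

/-- The least model of a (Horn) program `Q`, given as a set of rules (negative bodies
are ignored; Horn rules have empty negative bodies): the least set `M` of atoms such
that `h(r) ∈ M` whenever `r ∈ Q` and `b⁺(r) ⊆ M`. -/
def LM (Q : Set (LPRule α)) : Set α :=
  ⋂₀ {M : Set α | ∀ r ∈ Q, (↑r.pos : Set α) ⊆ M → r.head ∈ M}

/-- The reduct `P^S`: delete every rule whose negative body meets `S` and remove the
negative bodies of the remaining rules. -/
def reduct (P : LProgram α) (S : Set α) : Set (LPRule α) :=
  LPRule.horn '' {r | r ∈ P ∧ (↑r.neg : Set α) ∩ S = ∅}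

/-- `M` is a stable model of `P` if `M = LM (P^M)`. -/
def isStable (P : LProgram α) (M : Set α) : Prop :=
  M = LM (reduct P M)

/-- A propositional clause `a₁ ∨ … ∨ a_s ∨ ¬b₁ ∨ … ∨ ¬b_t`, given by its sets of
positive and negative literals. -/
structure Clause (α : Type) where
  pos : Finset α
  neg : Finset α
deriving DecidableEq

/-- A set of atoms `M` satisfies a clause `c`. -/
def Clause.sat (c : Clause α) (M : Set α) : Prop :=
  (∃ a ∈ c.pos, a ∈ M) ∨ (∃ b ∈ c.neg, b ∉ M)

/-- The atoms of the program `P^C`: the original atoms `x`, the copies `x(i)`, and the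
additional atom `f`. -/
inductive CAtom (α : Type) where
  | base : α → CAtom α
  | idx : α → ℕ → CAtom α
  | f : CAtom α
deriving DecidableEq

/-- The program `S = S₁ ∪ … ∪ S_k`, where `S_i` consists of the rules
`x_j(i) ← not(x₁(i)),…,not(x_{j-1}(i)), not(x_{j+1}(i)),…,not(x_r(i))` for `x_j ∈ A`. -/
def progS (A : Finset α) (k : ℕ) : LProgram (CAtom α) :=
  (Finset.Icc 1 k).biUnion (fun i =>
    A.image (fun x =>
      ⟨CAtom.idx x i, ∅, (A.erase x).image (fun y => CAtom.idx y i)⟩))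

/-- The program `P₁`, consisting of the rules `x_j ← x_j(i)` for `x_j ∈ A`,
`1 ≤ i ≤ k`. -/
def progP1 (A : Finset α) (k : ℕ) : LProgram (CAtom α) :=
  (Finset.Icc 1 k).biUnion (fun i =>
    A.image (fun x => ⟨CAtom.base x, {CAtom.idx x i}, ∅⟩))

/-- The program `P₂ = {p(c) : c ∈ C}`, where for a clause
`c = a₁ ∨ … ∨ a_s ∨ ¬b₁ ∨ … ∨ ¬b_t`,
`p(c) = f ← b₁,…,b_t, not(a₁),…,not(a_s), not(f)`. -/
def progP2 (C : Finset (Clause α)) : LProgram (CAtom α) :=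
  C.image (fun c =>
    ⟨CAtom.f, c.neg.image CAtom.base, insert CAtom.f (c.pos.image CAtom.base)⟩)

/-- The program `P^C = S ∪ P₁ ∪ P₂`. -/
def progC (A : Finset α) (C : Finset (Clause α)) (k : ℕ) : LProgram (CAtom α) :=
  progS A k ∪ progP1 A k ∪ progP2 C
/-- The S rule for atom `x` in copy `i`. -/
def Srule (A : Finset α) (x : α) (i : ℕ) : LPRule (CAtom α) :=
  ⟨CAtom.idx x i, ∅, (A.erase x).image (fun y => CAtom.idx y i)⟩

/-- The P₁ rule for atom `x` and copy `i`. -/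
def P1rule (x : α) (i : ℕ) : LPRule (CAtom α) :=
  ⟨CAtom.base x, {CAtom.idx x i}, ∅⟩

/-- The P₂ rule for clause `c`. -/
def P2rule (c : Clause α) : LPRule (CAtom α) :=
  ⟨CAtom.f, c.neg.image CAtom.base, insert CAtom.f (c.pos.image CAtom.base)⟩

lemma mem_progC {A : Finset α} {C : Finset (Clause α)} {k : ℕ} {r : LPRule (CAtom α)} :
    r ∈ progC A C k ↔
      (∃ i ∈ Finset.Icc 1 k, ∃ x ∈ A, r = Srule A x i) ∨
      (∃ i ∈ Finset.Icc 1 k, ∃ x ∈ A, r = P1rule x i) ∨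
      (∃ c ∈ C, r = P2rule c) := by
  simp only [progC, Finset.mem_union, progS, progP1, progP2, Finset.mem_biUnion,
    Finset.mem_image, Srule, P1rule, P2rule]
  constructor
  · rintro ((⟨i, hi, x, hx, rfl⟩ | ⟨i, hi, x, hx, rfl⟩) | ⟨c, hc, rfl⟩)
    · exact Or.inl ⟨i, hi, x, hx, rfl⟩
    · exact Or.inr (Or.inl ⟨i, hi, x, hx, rfl⟩)
    · exact Or.inr (Or.inr ⟨c, hc, rfl⟩)
  · rintro (⟨i, hi, x, hx, rfl⟩ | ⟨i, hi, x, hx, rfl⟩ | ⟨c, hc, rfl⟩)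
    · exact Or.inl (Or.inl ⟨i, hi, x, hx, rfl⟩)
    · exact Or.inl (Or.inr ⟨i, hi, x, hx, rfl⟩)
    · exact Or.inr ⟨c, hc, rfl⟩

lemma LM_closed (Q : Set (LPRule α)) :
    ∀ r ∈ Q, (↑r.pos : Set α) ⊆ LM Q → r.head ∈ LM Q := by
  intro r hr hsub
  exact Set.mem_sInter.mpr fun M hM => hM r hr (hsub.trans (Set.sInter_subset_of_mem hM))

lemma LM_subset {Q : Set (LPRule α)} {M : Set α}
    (h : ∀ r ∈ Q, (↑r.pos : Set α) ⊆ M → r.head ∈ M) : LM Q ⊆ M :=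
  Set.sInter_subset_of_mem h

lemma mem_reduct {P : LProgram α} {S : Set α} {q : LPRule α} :
    q ∈ reduct P S ↔ ∃ r, (r ∈ P ∧ (↑r.neg : Set α) ∩ S = ∅) ∧ q = r.horn := by
  simp [reduct, Set.mem_image, eq_comm, and_comm]

lemma forward_dir (A : Finset α) (C : Finset (Clause α)) (k : ℕ) (hk : 1 ≤ k)
    (M : Finset α) (hMA : M ⊆ A) (hMne : M.Nonempty) (hMc : M.card ≤ k)
    (hsat : ∀ c ∈ C, c.sat (↑M : Set α)) :
    ∃ N : Finset (CAtom α), isStable (progC A C k) (↑N : Set (CAtom α)) ∧ N.card ≤ 2 * k := by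
  obtain ⟨m₀, hm₀⟩ := hMne
  set l := M.toList with hl
  set σ : ℕ → α := fun i => l.getD (i - 1) m₀ with hσ
  have hσM : ∀ i, σ i ∈ M := by
    intro i
    by_cases h : i - 1 < l.length
    · rw [hσ]; simp only [List.getD_eq_getElem l m₀ h]
      exact Finset.mem_toList.mp (List.getElem_mem h)
    · rw [hσ]; simp only [List.getD_eq_default l m₀ (le_of_not_gt h)]; exact hm₀
  have hσsurj : ∀ x ∈ M, ∃ i ∈ Finset.Icc 1 k, σ i = x := by
    intro x hx
    obtain ⟨j, hj, hjx⟩ := List.mem_iff_getElem.mp (Finset.mem_toList.mpr hx)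
    refine ⟨j + 1, Finset.mem_Icc.mpr ⟨Nat.le_add_left 1 j, ?_⟩, ?_⟩
    · have : j + 1 ≤ l.length := hj
      calc j + 1 ≤ l.length := hj
        _ = M.card := M.length_toList
        _ ≤ k := hMc
    · rw [hσ]; simp only [Nat.add_sub_cancel]
      rw [List.getD_eq_getElem l m₀ hj]; exact hjx
  set Nf : Finset (CAtom α) :=
    ((Finset.Icc 1 k).image fun i => CAtom.idx (σ i) i) ∪ M.image CAtom.base with hNf
  have hmemN : ∀ a : CAtom α, a ∈ Nf ↔
      (∃ i ∈ Finset.Icc 1 k, a = CAtom.idx (σ i) i) ∨ ∃ x ∈ M, a = CAtom.base x := by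
    intro a; rw [hNf]; simp [eq_comm]
  have hfN : CAtom.f ∉ Nf := by
    rw [hmemN]; rintro (⟨i, _, h⟩ | ⟨x, _, h⟩) <;> exact nomatch h
  have hidxN : ∀ y j, CAtom.idx y j ∈ Nf ↔ j ∈ Finset.Icc 1 k ∧ y = σ j := by
    intro y j
    rw [hmemN]
    constructor
    · rintro (⟨i, hi, h⟩ | ⟨x, _, h⟩)
      · injection h with h1 h2; subst h2; exact ⟨hi, h1⟩
      · exact nomatch h
    · rintro ⟨hj, rfl⟩; exact Or.inl ⟨j, hj, rfl⟩
  have hbaseN : ∀ x, CAtom.base x ∈ Nf ↔ x ∈ M := by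
    intro x
    rw [hmemN]
    constructor
    · rintro (⟨i, _, h⟩ | ⟨y, hy, h⟩)
      · exact nomatch h
      · injection h with h1; subst h1; exact hy
    · intro hx; exact Or.inr ⟨x, hx, rfl⟩
  refine ⟨Nf, ?_, ?_⟩
  · -- stability
    have hidxLM : ∀ i ∈ Finset.Icc 1 k,
        CAtom.idx (σ i) i ∈ LM (reduct (progC A C k) (↑Nf : Set (CAtom α))) := by
      intro i hi
      have hmem : (Srule A (σ i) i).horn ∈ reduct (progC A C k) (↑Nf : Set (CAtom α)) := by
        rw [mem_reduct]
        refine ⟨Srule A (σ i) i, ⟨mem_progC.mpr (Or.inl ⟨i, hi, σ i, hMA (hσM i), rfl⟩), ?_⟩, rfl⟩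
        rw [Set.eq_empty_iff_forall_notMem]
        rintro a ⟨ha1, ha2⟩
        simp only [Srule, Finset.coe_image, Set.mem_image, Finset.mem_coe,
          Finset.mem_erase] at ha1
        obtain ⟨y, ⟨hy1, hy2⟩, rfl⟩ := ha1
        rw [Finset.mem_coe, hidxN] at ha2
        exact hy1 ha2.2
      have := LM_closed _ _ hmem (by simp [LPRule.horn, Srule])
      simpa [LPRule.horn, Srule] using this
    show (↑Nf : Set (CAtom α)) = LM (reduct (progC A C k) ↑Nf)
    refine Set.Subset.antisymm ?_ ?_
    · -- ⊆ LM
      intro a ha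
      rw [Finset.mem_coe, hmemN] at ha
      rcases ha with ⟨i, hi, rfl⟩ | ⟨x, hx, rfl⟩
      · exact hidxLM i hi
      · obtain ⟨i, hi, hix⟩ := hσsurj x hx
        have hmem : (P1rule x i).horn ∈ reduct (progC A C k) (↑Nf : Set (CAtom α)) := by
          rw [mem_reduct]
          refine ⟨P1rule x i, ⟨mem_progC.mpr (Or.inr (Or.inl ⟨i, hi, x, hMA hx, rfl⟩)), ?_⟩, rfl⟩
          simp [P1rule]
        have := LM_closed _ _ hmem ?_
        · simpa [LPRule.horn, P1rule] using this
        · simp only [LPRule.horn, P1rule]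
          intro a ha
          simp only [Finset.coe_singleton, Set.mem_singleton_iff] at ha
          subst ha
          rw [← hix]
          exact hidxLM i hi
    · -- LM ⊆ Nf
      refine LM_subset ?_
      intro q hq hpos
      rw [mem_reduct] at hq
      obtain ⟨r, ⟨hrP, hrneg⟩, rfl⟩ := hq
      rcases mem_progC.mp hrP with ⟨i, hi, x, hx, rfl⟩ | ⟨i, hi, x, hx, rfl⟩ | ⟨c, hc, rfl⟩
      · -- S rule
        simp only [LPRule.horn, Srule, Finset.mem_coe]
        rw [hidxN]
        refine ⟨hi, ?_⟩
        by_contra hne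
        have hmem : CAtom.idx (σ i) i ∈ ((↑(Srule A x i).neg : Set (CAtom α)) ∩ ↑Nf) := by
          constructor
          · simp only [Srule, Finset.coe_image, Set.mem_image, Finset.mem_coe,
              Finset.mem_erase]
            exact ⟨σ i, ⟨fun h => hne h.symm, hMA (hσM i)⟩, rfl⟩
          · rw [Finset.mem_coe, hidxN]; exact ⟨hi, rfl⟩
        rw [hrneg] at hmem
        exact hmem
      · -- P1 rule
        simp only [LPRule.horn, P1rule, Finset.coe_singleton,
          Set.singleton_subset_iff, Finset.mem_coe] at hpos ⊢
        rw [hidxN] at hpos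
        rw [hbaseN, hpos.2]
        exact hσM i
      · -- P2 rule
        exfalso
        rcases hsat c hc with ⟨a, ha, haM⟩ | ⟨b, hb, hbM⟩
        · have hmem : CAtom.base a ∈ ((↑(P2rule c).neg : Set (CAtom α)) ∩ ↑Nf) := by
            constructor
            · simp only [P2rule, Finset.coe_insert, Set.mem_insert_iff, Finset.coe_image,
                Set.mem_image, Finset.mem_coe]
              exact Or.inr ⟨a, ha, rfl⟩
            · rw [Finset.mem_coe, hbaseN]; exact haM
          rw [hrneg] at hmem
          exact hmem
        · have : CAtom.base b ∈ Nf := by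
            apply hpos
            simp only [LPRule.horn, P2rule, Finset.coe_image, Set.mem_image, Finset.mem_coe]
            exact ⟨b, hb, rfl⟩
          rw [hbaseN] at this
          exact hbM this
  · -- cardinality
    calc Nf.card ≤ ((Finset.Icc 1 k).image fun i => CAtom.idx (σ i) i).card
        + (M.image CAtom.base).card := Finset.card_union_le _ _
      _ ≤ (Finset.Icc 1 k).card + M.card :=
          Nat.add_le_add (Finset.card_image_le) (Finset.card_image_le)
      _ ≤ k + k := by
          rw [Nat.card_Icc]; exact Nat.add_le_add (by omega) hMc
      _ = 2 * k := by ring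
lemma backward_dir (A : Finset α) (hA : A.Nonempty) (C : Finset (Clause α))
    (hC : ∀ c ∈ C, c.pos ⊆ A ∧ c.neg ⊆ A) (k : ℕ) (hk : 1 ≤ k)
    (N : Finset (CAtom α)) (hst : isStable (progC A C k) (↑N : Set (CAtom α)))
    (hcard : N.card ≤ 2 * k) :
    ∃ M : Finset α, M ⊆ A ∧ M.Nonempty ∧ M.card ≤ k ∧ ∀ c ∈ C, c.sat (↑M : Set α) := by
  have hst' : (↑N : Set (CAtom α)) = LM (reduct (progC A C k) ↑N) := hst
  -- closedness of N
  have hcl : ∀ q ∈ reduct (progC A C k) (↑N : Set (CAtom α)),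
      (↑q.pos : Set (CAtom α)) ⊆ ↑N → q.head ∈ N := by
    intro q hq hp
    have h2 := LM_closed (reduct (progC A C k) ↑N) q hq (by rw [← hst']; exact hp)
    rw [← hst'] at h2
    exact h2
  -- leastness of N
  have hle : ∀ Y : Set (CAtom α),
      (∀ q ∈ reduct (progC A C k) (↑N : Set (CAtom α)),
        (↑q.pos : Set (CAtom α)) ⊆ Y → q.head ∈ Y) → (↑N : Set (CAtom α)) ⊆ Y := by
    intro Y hY
    rw [hst']
    exact LM_subset hY
  -- heads characterization
  have hheads : ∀ a ∈ N, (∃ x ∈ A, a = CAtom.base x) ∨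
      (∃ x ∈ A, ∃ i ∈ Finset.Icc 1 k, a = CAtom.idx x i) ∨ a = CAtom.f := by
    intro a ha
    refine hle {a | (∃ x ∈ A, a = CAtom.base x) ∨
      (∃ x ∈ A, ∃ i ∈ Finset.Icc 1 k, a = CAtom.idx x i) ∨ a = CAtom.f} ?_ ha
    intro q hq _
    obtain ⟨r, ⟨hrP, hrneg⟩, rfl⟩ := mem_reduct.mp hq
    rcases mem_progC.mp hrP with ⟨i, hi, x, hx, rfl⟩ | ⟨i, hi, x, hx, rfl⟩ | ⟨c, hc, rfl⟩
    · exact Or.inr (Or.inl ⟨x, hx, i, hi, rfl⟩)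
    · exact Or.inl ⟨x, hx, rfl⟩
    · exact Or.inr (Or.inr rfl)
  -- f is not in N
  have hfnot : CAtom.f ∉ N := by
    intro hf
    have hsub := hle {a | a ∈ (↑N : Set (CAtom α)) ∧ a ≠ CAtom.f} ?_
    · exact (hsub hf).2 rfl
    · intro q hq hp
      obtain ⟨r, ⟨hrP, hrneg⟩, rfl⟩ := mem_reduct.mp hq
      have hhd : r.horn.head ∈ N := by
        refine hcl _ (mem_reduct.mpr ⟨r, ⟨hrP, hrneg⟩, rfl⟩) ?_
        exact fun a ha => (hp ha).1
      refine ⟨hhd, ?_⟩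
      rcases mem_progC.mp hrP with ⟨i, hi, x, hx, rfl⟩ | ⟨i, hi, x, hx, rfl⟩ | ⟨c, hc, rfl⟩
      · simp [LPRule.horn, Srule]
      · simp [LPRule.horn, P1rule]
      · exfalso
        have : CAtom.f ∈ ((↑(P2rule c).neg : Set (CAtom α)) ∩ ↑N) := by
          constructor
          · simp [P2rule]
          · exact hf
        rw [hrneg] at this
        exact this
  -- uniqueness of the index atom in each copy
  have huniq : ∀ i, ∀ x y : α, CAtom.idx x i ∈ N → CAtom.idx y i ∈ N → x = y := by
    intro i x y hxN hyN
    by_contra hne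
    have hxA : x ∈ A := by
      rcases hheads _ hxN with ⟨z, _, h⟩ | ⟨z, hz, j, _, h⟩ | h
      · exact nomatch h
      · injection h with h1 h2; subst h1; exact hz
      · exact nomatch h
    have hyA : y ∈ A := by
      rcases hheads _ hyN with ⟨z, _, h⟩ | ⟨z, hz, j, _, h⟩ | h
      · exact nomatch h
      · injection h with h1 h2; subst h1; exact hz
      · exact nomatch h
    have hsub := hle {a | a ∈ (↑N : Set (CAtom α)) ∧ ∀ w, a ≠ CAtom.idx w i} ?_
    · exact (hsub hxN).2 x rfl
    · intro q hq hp
      obtain ⟨r, ⟨hrP, hrneg⟩, rfl⟩ := mem_reduct.mp hq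
      have hhd : r.horn.head ∈ N := by
        refine hcl _ (mem_reduct.mpr ⟨r, ⟨hrP, hrneg⟩, rfl⟩) ?_
        exact fun a ha => (hp ha).1
      refine ⟨hhd, ?_⟩
      rcases mem_progC.mp hrP with ⟨i', hi', z, hz, rfl⟩ | ⟨i', hi', z, hz, rfl⟩ | ⟨c, hc, rfl⟩
      · -- S rule: head is idx z i'; cannot have i' = i
        intro w hw
        simp only [LPRule.horn, Srule] at hw
        injection hw with h1 h2
        subst h2
        -- the rule for z in copy i was deleted since x or y is in its negative body
        have hkey : ∃ u, u ≠ z ∧ u ∈ A ∧ CAtom.idx u i' ∈ N := by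
          by_cases hxz : x = z
          · exact ⟨y, fun h => hne (hxz.trans h.symm), hyA, hyN⟩
          · exact ⟨x, hxz, hxA, hxN⟩
        obtain ⟨u, huz, huA, huN⟩ := hkey
        have : CAtom.idx u i' ∈ ((↑(Srule A z i').neg : Set (CAtom α)) ∩ ↑N) := by
          constructor
          · simp only [Srule, Finset.coe_image, Set.mem_image, Finset.mem_coe,
              Finset.mem_erase]
            exact ⟨u, ⟨huz, huA⟩, rfl⟩
          · exact huN
        rw [hrneg] at this
        exact this
      · intro w hw; simp [LPRule.horn, P1rule] at hw
      · intro w hw; simp [LPRule.horn, P2rule] at hw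
  -- existence of an index atom in each copy
  have hex : ∀ i : ℕ, ∃ x : α, i ∈ Finset.Icc 1 k → CAtom.idx x i ∈ N := by
    intro i
    by_cases hi : i ∈ Finset.Icc 1 k
    · by_contra hno
      push_neg at hno
      obtain ⟨x₀, hx₀⟩ := hA
      have hmem : (Srule A x₀ i).horn ∈ reduct (progC A C k) (↑N : Set (CAtom α)) := by
        rw [mem_reduct]
        refine ⟨Srule A x₀ i, ⟨mem_progC.mpr (Or.inl ⟨i, hi, x₀, hx₀, rfl⟩), ?_⟩, rfl⟩
        rw [Set.eq_empty_iff_forall_notMem]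
        rintro a ⟨ha1, ha2⟩
        simp only [Srule, Finset.coe_image, Set.mem_image, Finset.mem_coe,
          Finset.mem_erase] at ha1
        obtain ⟨y, _, rfl⟩ := ha1
        exact (hno y).2 ha2
      have := hcl _ hmem (by simp [LPRule.horn, Srule])
      simp only [LPRule.horn, Srule] at this
      exact (hno x₀).2 this
    · exact ⟨hA.choose, fun h => absurd h hi⟩
  choose τ hτ using hex
  have hτA : ∀ i ∈ Finset.Icc 1 k, τ i ∈ A := by
    intro i hi
    rcases hheads _ (hτ i hi) with ⟨z, _, h⟩ | ⟨z, hz, j, _, h⟩ | h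
    · exact nomatch h
    · injection h with h1 h2; subst h1; exact hz
    · exact nomatch h
  -- base atoms derivable from index atoms
  have hbaseidx : ∀ x ∈ A, ∀ i ∈ Finset.Icc 1 k, CAtom.idx x i ∈ N → CAtom.base x ∈ N := by
    intro x hx i hi hxi
    have hmem : (P1rule x i).horn ∈ reduct (progC A C k) (↑N : Set (CAtom α)) := by
      rw [mem_reduct]
      refine ⟨P1rule x i, ⟨mem_progC.mpr (Or.inr (Or.inl ⟨i, hi, x, hx, rfl⟩)), ?_⟩, rfl⟩
      simp [P1rule]
    have := hcl _ hmem ?_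
    · simpa [LPRule.horn, P1rule] using this
    · simp only [LPRule.horn, P1rule, Finset.coe_singleton, Set.singleton_subset_iff]
      exact hxi
  -- every base atom in N comes from an index atom
  have hbase_i : ∀ x, CAtom.base x ∈ N → ∃ i ∈ Finset.Icc 1 k, CAtom.idx x i ∈ N := by
    intro x hxN
    have hsub := hle {a | (∃ z i, a = CAtom.idx z i ∧ a ∈ (↑N : Set (CAtom α))) ∨
      (∃ z, a = CAtom.base z ∧ ∃ i ∈ Finset.Icc 1 k, CAtom.idx z i ∈ N)} ?_
    · rcases hsub hxN with ⟨z, i, h, _⟩ | ⟨z, h, hi⟩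
      · exact nomatch h
      · injection h with h1; subst h1; exact hi
    · intro q hq hp
      obtain ⟨r, ⟨hrP, hrneg⟩, rfl⟩ := mem_reduct.mp hq
      rcases mem_progC.mp hrP with ⟨i, hi, x', hx', rfl⟩ | ⟨i, hi, x', hx', rfl⟩ | ⟨c, hc, rfl⟩
      · -- S rule
        refine Or.inl ⟨x', i, rfl, ?_⟩
        refine hcl _ (mem_reduct.mpr ⟨_, ⟨hrP, hrneg⟩, rfl⟩) ?_
        simp [LPRule.horn, Srule]
      · -- P1 rule
        have hx'i : CAtom.idx x' i ∈ N := by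
          have hmem2 : CAtom.idx x' i ∈ (↑(P1rule x' i).horn.pos : Set (CAtom α)) := by
            simp [LPRule.horn, P1rule]
          rcases hp hmem2 with ⟨z, j, h, hN⟩ | ⟨z, h, _⟩
          · exact hN
          · exact nomatch h
        exact Or.inr ⟨x', rfl, i, hi, hx'i⟩
      · -- P2 rule: would derive f, contradiction
        exfalso
        have hposN : (↑(P2rule c).horn.pos : Set (CAtom α)) ⊆ ↑N := by
          intro a ha
          simp only [LPRule.horn, P2rule, Finset.coe_image, Set.mem_image,
            Finset.mem_coe] at ha
          obtain ⟨b, hb, rfl⟩ := ha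
          rcases hp (by simp only [LPRule.horn, P2rule, Finset.coe_image, Set.mem_image,
              Finset.mem_coe]; exact ⟨b, hb, rfl⟩) with ⟨z, j, h, _⟩ | ⟨z, h, hi2⟩
          · exact nomatch h
          · injection h with h1
            subst h1
            obtain ⟨i2, hi2', hN2⟩ := hi2
            have hbA : b ∈ A := by
              rcases hheads _ hN2 with ⟨w, _, h⟩ | ⟨w, hw, j2, _, h⟩ | h
              · exact nomatch h
              · injection h with h1 h2; subst h1; exact hw
              · exact nomatch h
            exact hbaseidx b hbA i2 hi2' hN2
        have := hcl _ (mem_reduct.mpr ⟨_, ⟨hrP, hrneg⟩, rfl⟩) hposN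
        simp only [LPRule.horn, P2rule] at this
        exact hfnot this
  -- define the model
  set M : Finset α := A.filter (fun x => CAtom.base x ∈ N) with hM
  have hbaseM : ∀ x, x ∈ M ↔ x ∈ A ∧ CAtom.base x ∈ N := by
    intro x; rw [hM]; simp
  refine ⟨M, Finset.filter_subset _ _, ?_, ?_, ?_⟩
  · -- nonempty
    have h1 : (1 : ℕ) ∈ Finset.Icc 1 k := Finset.mem_Icc.mpr ⟨le_refl 1, hk⟩
    refine ⟨τ 1, (hbaseM _).mpr ⟨hτA 1 h1, ?_⟩⟩
    exact hbaseidx _ (hτA 1 h1) 1 h1 (hτ 1 h1)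
  · -- cardinality
    have hsub : M ⊆ (Finset.Icc 1 k).image τ := by
      intro x hx
      obtain ⟨i, hi, hxi⟩ := hbase_i x ((hbaseM x).mp hx).2
      rw [Finset.mem_image]
      exact ⟨i, hi, (huniq i (τ i) x (hτ i hi) hxi)⟩
    calc M.card ≤ ((Finset.Icc 1 k).image τ).card := Finset.card_le_card hsub
      _ ≤ (Finset.Icc 1 k).card := Finset.card_image_le
      _ ≤ k := by rw [Nat.card_Icc]; omega
  · -- satisfaction
    intro c hc
    by_cases h : ∃ a ∈ c.pos, CAtom.base a ∈ N
    · obtain ⟨a, ha, haN⟩ := h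
      exact Or.inl ⟨a, ha, Finset.mem_coe.mpr ((hbaseM a).mpr ⟨(hC c hc).1 ha, haN⟩)⟩
    · push_neg at h
      have hmem : (P2rule c).horn ∈ reduct (progC A C k) (↑N : Set (CAtom α)) := by
        rw [mem_reduct]
        refine ⟨P2rule c, ⟨mem_progC.mpr (Or.inr (Or.inr ⟨c, hc, rfl⟩)), ?_⟩, rfl⟩
        rw [Set.eq_empty_iff_forall_notMem]
        rintro a ⟨ha1, ha2⟩
        simp only [P2rule, Finset.coe_insert, Set.mem_insert_iff, Finset.coe_image,
          Set.mem_image, Finset.mem_coe] at ha1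
        rcases ha1 with rfl | ⟨b, hb, rfl⟩
        · exact hfnot ha2
        · exact h b hb ha2
      by_cases h2 : ∀ b ∈ c.neg, CAtom.base b ∈ N
      · exfalso
        have hposN : (↑(P2rule c).horn.pos : Set (CAtom α)) ⊆ ↑N := by
          intro a ha
          simp only [LPRule.horn, P2rule, Finset.coe_image, Set.mem_image,
            Finset.mem_coe] at ha
          obtain ⟨b, hb, rfl⟩ := ha
          exact h2 b hb
        have := hcl _ hmem hposN
        simp only [LPRule.horn, P2rule] at this
        exact hfnot this
      · push_neg at h2
        obtain ⟨b, hb, hbN⟩ := h2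
        refine Or.inr ⟨b, hb, ?_⟩
        rw [Finset.mem_coe, hbaseM]
        exact fun hh => hbN hh.2

/-- a finite collection `C` of clauses over a nonempty finite set `A` of
atoms has a nonempty model with at most `k` elements (`k ≥ 1`) iff the program `P^C`
has a stable model with at most `2k` elements. -/
theorem clauses_model_iff_stable (A : Finset α) (hA : A.Nonempty)
    (C : Finset (Clause α)) (hC : ∀ c ∈ C, c.pos ⊆ A ∧ c.neg ⊆ A)
    (k : ℕ) (hk : 1 ≤ k) :
    (∃ M : Finset α, M ⊆ A ∧ M.Nonempty ∧ M.card ≤ k ∧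
      ∀ c ∈ C, c.sat (↑M : Set α)) ↔
    (∃ M : Finset (CAtom α), isStable (progC A C k) (↑M : Set (CAtom α)) ∧
      M.card ≤ 2 * k) := by
  constructor
  · rintro ⟨M, hMA, hMne, hMc, hsat⟩
    exact forward_dir A C k hk M hMA hMne hMc hsat
  · rintro ⟨N, hst, hcard⟩
    exact backward_dir A hA C hC k hk N hst hcard
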